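/- Quantum blobs are fixed points of symplectic polar duality: for every S ∈ Sp(n), the quantum blob Q = S(B^{2n}(√ħ)) satisfies Q^{ħ,ω} = Q. -/

import Mathlib

open Matrix ComplexOrder MeasureTheory

noncomputable section

/-- Phase space ℝ^{2n} ≃ ℝⁿ × ℝⁿ, with coordinates z = (x,p). -/
abbrev PS (n : ℕ) := Fin n ⊕ Fin n → ℝ

/-- The standard symplectic matrix J = [[0, I], [-I, 0]]. -/
def Jmat (n : ℕ) : Matrix (Fin n ⊕ Fin n) (Fin n ⊕ Fin n) ℝ :=
  Matrix.fromBlocks 0 1 (-1) 0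

/-- The standard symplectic form ω(z,z′) = (Jz)·z′. -/
def symp (n : ℕ) (z z' : PS n) : ℝ := (Jmat n).mulVec z ⬝ᵥ z'

/-- The symplectic group Sp(n) = {S : SᵀJS = J}. -/
def Sp (n : ℕ) : Set (Matrix (Fin n ⊕ Fin n) (Fin n ⊕ Fin n) ℝ) :=
  {S | Sᵀ * Jmat n * S = Jmat n}

/-- Symplectic ℏ-polar dual Ω^{ℏ,ω} = {z′ : sup_{z∈Ω} ω(z,z′) ≤ ℏ}. -/
def sympDual (n : ℕ) (ℏ : ℝ) (Ω : Set (PS n)) : Set (PS n) :=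
  {z' | ∀ z ∈ Ω, symp n z z' ≤ ℏ}

/-- The closed Euclidean ball B^{2n}(√ℏ) of radius √ℏ centered at 0. -/
def ball2n (n : ℕ) (ℏ : ℝ) : Set (PS n) := {z | z ⬝ᵥ z ≤ ℏ}

/-- The covariance ellipsoid Ω_Σ = {z : (1/2)Σ⁻¹z·z ≤ 1}. -/
def covEll (n : ℕ) (Sig : Matrix (Fin n ⊕ Fin n) (Fin n ⊕ Fin n) ℝ) : Set (PS n) :=
  {z | (1 / 2 : ℝ) * (Sig⁻¹.mulVec z ⬝ᵥ z) ≤ 1}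

/-! A symplectic matrix preserves `ω`, so symplectic polar duality commutes with it and it suffices
to treat the ball. As `ω(z, z') = Jz ⬝ z'` with `J` orthogonal, the symplectic dual of the ball is
its Euclidean `ℏ`-polar, which is the ball itself. -/

section DotProduct

variable {ι : Type*} [Fintype ι]

lemma forall_dotProduct_le_iff {r : ℝ} (hr : 0 < r) (w : ι → ℝ) :
    (∀ v : ι → ℝ, v ⬝ᵥ v ≤ r → v ⬝ᵥ w ≤ r) ↔ w ⬝ᵥ w ≤ r := by
  refine ⟨fun h ↦ ?_, fun hw v hv ↦ ?_⟩
  · by_contra! hlt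
    set a := w ⬝ᵥ w
    -- `t • w` lies in the ball since `4 r a ≤ (a + r)²`, while `t * a > r` because `a > r`.
    set t := 2 * r / (a + r)
    have hpos : 0 < a + r := by linarith
    have hin : t • w ⬝ᵥ t • w ≤ r := by
      rw [smul_dotProduct, dotProduct_smul, smul_eq_mul, smul_eq_mul, ← mul_assoc, ← sq,
        div_pow, div_mul_eq_mul_div, div_le_iff₀ (by positivity)]
      nlinarith [sq_nonneg (a - r)]
    have hout : r < t • w ⬝ᵥ w := by
      rw [smul_dotProduct, smul_eq_mul, div_mul_eq_mul_div, lt_div_iff₀ hpos]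
      nlinarith
    exact (h _ hin).not_gt hout
  · have hsq : 0 ≤ (v - w) ⬝ᵥ (v - w) := dotProduct_self_star_nonneg (v - w)
    rw [sub_dotProduct, dotProduct_sub, dotProduct_sub, dotProduct_comm w v] at hsq
    linarith

variable [DecidableEq ι]

lemma dotProduct_mulVec_self_of_transpose_mul_self {O : Matrix ι ι ℝ} (hO : Oᵀ * O = 1)
    (v : ι → ℝ) : O *ᵥ v ⬝ᵥ O *ᵥ v = v ⬝ᵥ v := by
  rw [dotProduct_mulVec, ← mulVec_transpose, mulVec_mulVec, hO, one_mulVec]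

lemma mulVec_image_setOf_dotProduct_self_le {O : Matrix ι ι ℝ}
    (hO : Oᵀ * O = 1) (r : ℝ) :
    O.mulVec '' {v | v ⬝ᵥ v ≤ r} = {v | v ⬝ᵥ v ≤ r} := by
  have hO' : O * Oᵀ = 1 := mul_eq_one_comm.1 hO
  refine Set.Subset.antisymm ?_ fun v hv ↦ ⟨Oᵀ *ᵥ v, ?_, ?_⟩
  · rintro _ ⟨v, hv, rfl⟩
    simpa [dotProduct_mulVec_self_of_transpose_mul_self hO] using hv
  · simpa [dotProduct_mulVec_self_of_transpose_mul_self (O := Oᵀ) (by rwa [transpose_transpose])]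
      using hv
  · rw [mulVec_mulVec, hO', one_mulVec]

end DotProduct

lemma Jmat_eq_neg_J (n : ℕ) : Jmat n = -J (Fin n) ℝ := by
  simp [Jmat, J, fromBlocks_neg]

lemma Jmat_transpose_mul_self (n : ℕ) : (Jmat n)ᵀ * Jmat n = 1 := by
  simp [Jmat_eq_neg_J, J_transpose, J_squared]

lemma mem_Sp_iff {n : ℕ} {S : Matrix (Fin n ⊕ Fin n) (Fin n ⊕ Fin n) ℝ} :
    S ∈ Sp n ↔ S ∈ symplecticGroup (Fin n) ℝ := by
  simp [Sp, SymplecticGroup.mem_iff', Jmat_eq_neg_J]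

lemma isUnit_of_mem_Sp {n : ℕ} {S : Matrix (Fin n ⊕ Fin n) (Fin n ⊕ Fin n) ℝ} (hS : S ∈ Sp n) :
    IsUnit S :=
  (isUnit_iff_isUnit_det S).2 (SymplecticGroup.symplectic_det (mem_Sp_iff.1 hS))

lemma symp_mulVec_mulVec {n : ℕ} {S : Matrix (Fin n ⊕ Fin n) (Fin n ⊕ Fin n) ℝ} (hS : S ∈ Sp n)
    (z z' : PS n) : symp n (S *ᵥ z) (S *ᵥ z') = symp n z z' := by
  rw [symp, symp, dotProduct_mulVec, ← mulVec_transpose, mulVec_mulVec, mulVec_mulVec, hS]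

lemma sympDual_image_mulVec {n : ℕ} (ℏ : ℝ) {S : Matrix (Fin n ⊕ Fin n) (Fin n ⊕ Fin n) ℝ}
    (hS : S ∈ Sp n) (Ω : Set (PS n)) :
    sympDual n ℏ (S.mulVec '' Ω) = S.mulVec '' sympDual n ℏ Ω := by
  ext z'
  obtain ⟨v, rfl⟩ := mulVec_surjective_iff_isUnit.2 (isUnit_of_mem_Sp hS) z'
  rw [(mulVec_injective_of_isUnit (isUnit_of_mem_Sp hS)).mem_set_image]
  simp only [sympDual, Set.mem_ofPred_eq, Set.forall_mem_image, symp_mulVec_mulVec hS]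

lemma sympDual_ball2n (n : ℕ) {ℏ : ℝ} (hℏ : 0 < ℏ) : sympDual n ℏ (ball2n n ℏ) = ball2n n ℏ := by
  ext z'
  calc z' ∈ sympDual n ℏ (ball2n n ℏ)
      ↔ ∀ v ∈ (Jmat n).mulVec '' ball2n n ℏ, v ⬝ᵥ z' ≤ ℏ := by
        rw [Set.forall_mem_image]; rfl
    _ ↔ z' ∈ ball2n n ℏ := by
      rw [ball2n, mulVec_image_setOf_dotProduct_self_le (Jmat_transpose_mul_self n)]
      exact forall_dotProduct_le_iff hℏ z'

/-- Quantum blobs are fixed points of symplectic polar duality: Q^{ℏ,ω} = Q for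
Q = S(B^{2n}(√ℏ)), S ∈ Sp(n). -/
theorem sympDual_quantum_blob (n : ℕ) (ℏ : ℝ) (hℏ : 0 < ℏ)
    (S : Matrix (Fin n ⊕ Fin n) (Fin n ⊕ Fin n) ℝ) (hS : S ∈ Sp n) :
    sympDual n ℏ (S.mulVec '' ball2n n ℏ) = S.mulVec '' ball2n n ℏ := by
  rw [sympDual_image_mulVec ℏ hS, sympDual_ball2n n hℏ]
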